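/- Let n₁, n₂ ∈ ℝ³ be unit vectors and take the maximally mixed qubit state ρ = I/2 (i.e., r = 0). With A = n₁·σ, B = n₂·σ, C = A − Tr(ρA)·I = A, D = B − Tr(ρB)·I = B, and K = (C + iD)(C − iD), the Bloch vector b of the normalized uncertainty matrix, defined by K/Tr(K) = (I + b·σ)/2, satisfies ‖b‖ = √(1 − (n₁·n₂)²). -/

import Mathlib

/-!
The Pauli product rule `(v·σ)(w·σ) = (v·w) I + i (v×w)·σ` does all the work. Pauli matrices
are traceless, so `Tr(ρA) = Tr(ρB) = 0` for `ρ = I/2` and the centring is trivial. Writing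
`K = A² + B² - i[A, B]`, the rule gives `A² = B² = I` and `[A, B] = 2i (n₁×n₂)·σ`, hence
`K = 2 (I + (n₁×n₂)·σ)`, `Tr K = 4` and `b = n₁×n₂`. Lagrange's identity
`‖n₁×n₂‖² = ‖n₁‖²‖n₂‖² - (n₁·n₂)²` finishes the proof.
-/

open Matrix Complex

def sigmaX : Matrix (Fin 2) (Fin 2) ℂ := !![0, 1; 1, 0]

def sigmaY : Matrix (Fin 2) (Fin 2) ℂ := !![0, -Complex.I; Complex.I, 0]

def sigmaZ : Matrix (Fin 2) (Fin 2) ℂ := !![1, 0; 0, -1]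

/-- `v·σ = v₁σx + v₂σy + v₃σz` for `v ∈ ℝ³`. -/
noncomputable def pauliVec (v : Fin 3 → ℝ) : Matrix (Fin 2) (Fin 2) ℂ :=
  (v 0 : ℂ) • sigmaX + (v 1 : ℂ) • sigmaY + (v 2 : ℂ) • sigmaZ

lemma pauliVec_eq (v : Fin 3 → ℝ) :
    pauliVec v = !![(v 2 : ℂ), v 0 - v 1 * I; v 0 + v 1 * I, -(v 2 : ℂ)] := by
  ext i j
  fin_cases i <;> fin_cases j <;> simp [pauliVec, sigmaX, sigmaY, sigmaZ]; ring

lemma pauliVec_zero : pauliVec 0 = 0 := by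
  simp [pauliVec]

lemma pauliVec_neg (v : Fin 3 → ℝ) : pauliVec (-v) = -pauliVec v := by
  simp only [pauliVec, Pi.neg_apply, ofReal_neg, neg_smul, neg_add]

lemma trace_pauliVec (v : Fin 3 → ℝ) : (pauliVec v).trace = 0 := by
  simp [pauliVec_eq, trace_fin_two]

lemma pauliVec_injective : Function.Injective pauliVec := by
  intro v w h
  rw [pauliVec_eq, pauliVec_eq] at h
  have h00 := congrFun (congrFun h 0) 0
  have h01 := congrFun (congrFun h 0) 1
  simp only [of_apply, cons_val', cons_val_zero, cons_val_one, empty_val', cons_val_fin_one,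
    Complex.ext_iff, sub_re, sub_im, mul_re, mul_im, ofReal_re, ofReal_im, I_re, I_im] at h00 h01
  ext i
  fin_cases i <;> simp <;> linarith [h00.1, h01.1, h01.2]

lemma pauliVec_mul_pauliVec (v w : Fin 3 → ℝ) :
    pauliVec v * pauliVec w = ((v ⬝ᵥ w : ℝ) : ℂ) • 1 + I • pauliVec (v ⨯₃ w) := by
  rw [pauliVec_eq, pauliVec_eq, pauliVec_eq]
  ext i j
  fin_cases i <;> fin_cases j <;>
    simp [dotProduct, Fin.sum_univ_three, cross_apply, Complex.ext_iff] <;> and_intros <;> ring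

lemma pauliVec_mul_self (v : Fin 3 → ℝ) :
    pauliVec v * pauliVec v = ((v ⬝ᵥ v : ℝ) : ℂ) • 1 := by
  rw [pauliVec_mul_pauliVec, cross_self, pauliVec_zero, smul_zero, add_zero]

lemma pauliVec_commutator (v w : Fin 3 → ℝ) :
    pauliVec v * pauliVec w - pauliVec w * pauliVec v = (2 * I) • pauliVec (v ⨯₃ w) := by
  rw [pauliVec_mul_pauliVec, pauliVec_mul_pauliVec, dotProduct_comm w, ← cross_anticomm,
    pauliVec_neg]
  module

lemma add_I_smul_mul_sub_I_smul {R : Type*} [Ring R] [Algebra ℂ R] (X Y : R) :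
    (X + I • Y) * (X - I • Y) = X * X + Y * Y - I • (X * Y - Y * X) := by
  rw [add_mul, mul_sub, mul_sub, smul_mul_assoc, smul_mul_assoc, mul_smul_comm, mul_smul_comm,
    smul_smul, I_mul_I, smul_sub]
  module

lemma pauliVec_add_I_smul_mul_sub_I_smul (v w : Fin 3 → ℝ) :
    (pauliVec v + I • pauliVec w) * (pauliVec v - I • pauliVec w)
      = ((v ⬝ᵥ v + w ⬝ᵥ w : ℝ) : ℂ) • 1 + (2 : ℂ) • pauliVec (v ⨯₃ w) := by
  rw [add_I_smul_mul_sub_I_smul, pauliVec_mul_self, pauliVec_mul_self, pauliVec_commutator,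
    smul_smul, ofReal_add, add_smul]
  ring_nf
  rw [I_sq]
  module

lemma trace_half_smul_one_mul_pauliVec (v : Fin 3 → ℝ) :
    ((1 / 2 : ℂ) • (1 : Matrix (Fin 2) (Fin 2) ℂ) * pauliVec v).trace = 0 := by
  rw [smul_mul_assoc, one_mul, trace_smul, trace_pauliVec, smul_zero]

lemma inv_trace_smul_smul_one_add_pauliVec {c : ℂ} (hc : c ≠ 0) (u : Fin 3 → ℝ) :
    (c • (1 + pauliVec u)).trace⁻¹ • c • (1 + pauliVec u) = (1 / 2 : ℂ) • (1 + pauliVec u) := by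
  rw [trace_smul, trace_add, trace_pauliVec, trace_one, smul_smul]
  congr 1
  simp [field]

lemma half_smul_one_add_pauliVec_injective :
    Function.Injective fun u : Fin 3 → ℝ => (1 / 2 : ℂ) • (1 + pauliVec u) :=
  fun _ _ h => pauliVec_injective (add_left_cancel (smul_right_injective _ (by norm_num) h))

theorem stmt14 (n₁ n₂ : Fin 3 → ℝ) (hn₁ : n₁ ⬝ᵥ n₁ = 1) (hn₂ : n₂ ⬝ᵥ n₂ = 1)
    (ρ : Matrix (Fin 2) (Fin 2) ℂ)
    (hρ : ρ = (1 / 2 : ℂ) • (1 : Matrix (Fin 2) (Fin 2) ℂ))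
    (A B : Matrix (Fin 2) (Fin 2) ℂ) (hA : A = pauliVec n₁) (hB : B = pauliVec n₂)
    (C D K : Matrix (Fin 2) (Fin 2) ℂ)
    (hC : C = A - (ρ * A).trace • (1 : Matrix (Fin 2) (Fin 2) ℂ))
    (hD : D = B - (ρ * B).trace • (1 : Matrix (Fin 2) (Fin 2) ℂ))
    (hK : K = (C + Complex.I • D) * (C - Complex.I • D))
    (b : Fin 3 → ℝ)
    (hb : (K.trace)⁻¹ • K
      = (1 / 2 : ℂ) • ((1 : Matrix (Fin 2) (Fin 2) ℂ) + pauliVec b)) :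
    C = A ∧ D = B ∧
    Real.sqrt (b ⬝ᵥ b) = Real.sqrt (1 - (n₁ ⬝ᵥ n₂) ^ 2) := by
  have hCA : C = A := by
    rw [hC, hρ, hA, trace_half_smul_one_mul_pauliVec, zero_smul, sub_zero]
  have hDB : D = B := by
    rw [hD, hρ, hB, trace_half_smul_one_mul_pauliVec, zero_smul, sub_zero]
  have hK_eq : K = (2 : ℂ) • (1 + pauliVec (n₁ ⨯₃ n₂)) := by
    rw [hK, hCA, hDB, hA, hB, pauliVec_add_I_smul_mul_sub_I_smul, hn₁, hn₂, smul_add]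
    norm_num
  have hb_eq : b = n₁ ⨯₃ n₂ := by
    rw [hK_eq, inv_trace_smul_smul_one_add_pauliVec two_ne_zero] at hb
    exact half_smul_one_add_pauliVec_injective hb.symm
  refine ⟨hCA, hDB, ?_⟩
  rw [hb_eq, cross_dot_cross, hn₁, hn₂, dotProduct_comm n₂, sq, one_mul]
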